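/- Let G be a countable discrete group with a measure-preserving action on a probability space (X, μ). Suppose there exists a sequence (ξ_n) of nonnegative measurable functions on G × X with ‖ξ_n‖₁ = 1 for every n such that (a) for every g ∈ G, ‖ξ_n^g − ξ_n‖₁ → 0, and (b) for every g ∈ G, ∫_X ξ_n(g, x) dμ(x) → 0. Then the functions p_n ∈ ℓ¹(G) defined by p_n(g) := ∫_X ξ_n(g, x) dμ(x) form an inner amenability sequence for G; in particular, G admits an inner amenability sequence. (This is the content of the proposition that inner amenability of the translation groupoid of a p.m.p. action implies inner amenability of the acting group.) -/
import Mathlib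


open Filter Topology MeasureTheory

/-- An inner amenability sequence for a countable discrete group `G`: a sequence `p n` of
nonnegative summable functions on `G` of total mass `1` such that for every `g ∈ G` the
conjugated functions `(p n)^g : h ↦ p n (g * h * g⁻¹)` satisfy `‖(p n)^g - p n‖₁ → 0`
and `p n g → 0`. -/
def InnerAmenabilitySeq {G : Type*} [Group G] (p : ℕ → G → ℝ) : Prop :=
  (∀ n g, 0 ≤ p n g) ∧
  (∀ n, HasSum (p n) 1) ∧
  (∀ g : G, Tendsto (fun n => ∑' h : G, |p n (g * h * g⁻¹) - p n h|) atTop (𝓝 0)) ∧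
  (∀ g : G, Tendsto (fun n => p n g) atTop (𝓝 0))

/-- Let `G` be a countable group with a measure-preserving action on a probability space
`(X, μ)`.  If `(ξ n)` is a sequence of nonnegative integrable functions on `G × X` of total
mass `1` such that `‖(ξ n)^g - ξ n‖₁ → 0` (where `ξ^g (h, x) = ξ (g h g⁻¹, g • x)`) and
`∫ ξ n (g, ·) dμ → 0` for every `g ∈ G`, then the functions `p n (g) := ∫ ξ n (g, ·) dμ`
form an inner amenability sequence for `G`; in particular `G` admits an inner amenability
sequence.  (Inner amenability of the translation groupoid of a p.m.p. action implies inner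
amenability of the acting group.) -/
theorem innerAmenabilitySeq_of_translation_groupoid
    {G : Type*} [Group G] [Countable G]
    {X : Type*} [MeasurableSpace X] (μ : Measure X) [IsProbabilityMeasure μ]
    [MulAction G X]
    (hmp : ∀ g : G, MeasurePreserving (fun x : X => g • x) μ μ)
    (ξ : ℕ → G → X → ℝ)
    (hmeas : ∀ n g, Measurable (ξ n g))
    (hint : ∀ n g, Integrable (ξ n g) μ)
    (hpos : ∀ n g x, 0 ≤ ξ n g x)
    (hnorm : ∀ n, ∑' h : G, ∫ x, ξ n h x ∂μ = 1)
    (ha : ∀ g : G,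
      Tendsto (fun n => ∑' h : G, ∫ x, |ξ n (g * h * g⁻¹) (g • x) - ξ n h x| ∂μ)
        atTop (𝓝 0))
    (hb : ∀ g : G, Tendsto (fun n => ∫ x, ξ n g x ∂μ) atTop (𝓝 0)) :
    InnerAmenabilitySeq (fun n g => ∫ x, ξ n g x ∂μ) := by
  set p : ℕ → G → ℝ := fun n g => ∫ x, ξ n g x ∂μ with hp
  have hp0 : ∀ n g, 0 ≤ p n g := fun n g => integral_nonneg (hpos n g)
  have hsummable : ∀ n, Summable (p n) := by
    intro n
    by_contra hns
    have := tsum_eq_zero_of_not_summable hns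
    rw [hnorm n] at this
    exact one_ne_zero this
  have hme : ∀ g : G, MeasurableEmbedding (fun x : X => g • x) := by
    intro g
    exact (MeasurableEquiv.mk (MulAction.toPerm g) (hmp g).measurable
      (hmp g⁻¹).measurable).measurableEmbedding
  have hcomp : ∀ n (g k : G), ∫ x, ξ n k (g • x) ∂μ = p n k := fun n g k =>
    (hmp g).integral_comp (hme g) (ξ n k)
  have hintc : ∀ n (g k : G), Integrable (fun x => ξ n k (g • x)) μ := fun n g k =>
    ((hmp g).integrable_comp_emb (hme g)).2 (hint n k)
  have hconjsum : ∀ n (g : G), Summable (fun h => p n (g * h * g⁻¹)) := by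
    intro n g
    exact ((MulAut.conj g).toEquiv.summable_iff (f := p n)).2 (hsummable n)
  refine ⟨hp0, fun n => (hnorm n) ▸ (hsummable n).hasSum, ?_, hb⟩
  intro g
  apply squeeze_zero (g := fun n => ∑' h : G, ∫ x, |ξ n (g * h * g⁻¹) (g • x) - ξ n h x| ∂μ)
    (fun n => tsum_nonneg fun h => abs_nonneg _) _ (ha g)
  intro n
  have hbound : ∀ h : G, ∫ x, |ξ n (g * h * g⁻¹) (g • x) - ξ n h x| ∂μ
      ≤ p n (g * h * g⁻¹) + p n h := by
    intro h
    have h1 := hintc n g (g * h * g⁻¹)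
    have h2 := hint n h
    calc ∫ x, |ξ n (g * h * g⁻¹) (g • x) - ξ n h x| ∂μ
        ≤ ∫ x, (ξ n (g * h * g⁻¹) (g • x) + ξ n h x) ∂μ := by
          refine integral_mono (h1.sub h2).abs (h1.add h2) (fun x => ?_)
          refine (abs_sub _ _).trans (le_of_eq ?_)
          rw [abs_of_nonneg (hpos n _ _), abs_of_nonneg (hpos n _ _)]
      _ = p n (g * h * g⁻¹) + p n h := by
          rw [integral_add h1 h2, hcomp]
  have hRsum : Summable (fun h => ∫ x, |ξ n (g * h * g⁻¹) (g • x) - ξ n h x| ∂μ) :=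
    Summable.of_nonneg_of_le (fun h => integral_nonneg fun x => abs_nonneg _)
      hbound ((hconjsum n g).add (hsummable n))
  have hLsum : Summable (fun h => |p n (g * h * g⁻¹) - p n h|) :=
    Summable.of_nonneg_of_le (fun h => abs_nonneg _)
      (fun h => (abs_sub _ _).trans (le_of_eq (by
        rw [abs_of_nonneg (hp0 n _), abs_of_nonneg (hp0 n _)])))
      ((hconjsum n g).add (hsummable n))
  refine Summable.tsum_le_tsum (fun h => ?_) hLsum hRsum
  have h1 := hintc n g (g * h * g⁻¹)
  have h2 := hint n h
  calc |p n (g * h * g⁻¹) - p n h|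
      = |∫ x, (ξ n (g * h * g⁻¹) (g • x) - ξ n h x) ∂μ| := by
        rw [integral_sub h1 h2, hcomp]
    _ ≤ ∫ x, |ξ n (g * h * g⁻¹) (g • x) - ξ n h x| ∂μ := by
        simpa [Real.norm_eq_abs] using
          norm_integral_le_integral_norm (fun x => ξ n (g * h * g⁻¹) (g • x) - ξ n h x)
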